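/- Let T: ℝ₊ⁿ → ℝ₊ⁿ be the solution operator of the thresholding subproblem, T(b) = s* + e μ*, where (s*, μ*) minimizes (1/2)‖s + eμ − b‖₂² + β‖s‖₁ over s ≥ 0, μ ≥ 0. If d ∈ {0,1,…,n} and the sorted values b_{i₁} ≥ ⋯ ≥ b_{iₙ} of b satisfy (n−d) b_{i_d} > Σ_{j=d+1}ⁿ b_{i_j} + nβ ≥ (n−d) b_{i_{d+1}} (with b_{i₀} = +∞), then the background value is μ* = (Σ_{j=d+1}ⁿ b_{i_j} + dβ)/(n−d), s*_{i_j} = b_{i_j} − β − μ* > 0 for j ≤ d, and s*_{i_j} = 0 for j > d. -/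

import Mathlib

/-!
The candidate satisfies the KKT conditions of this convex problem. With residuals
`r = s* + e μ* − b`, stationarity in `μ` is `∑ r = 0`, which is exactly the formula for `μ*`;
stationarity in `s` asks `r_i + β ≥ 0` with equality where `s*_i > 0`. The two threshold
inequalities say precisely that `β + μ*` separates the `d` largest entries of `b` (strictly
above) from the others (weakly below), which gives these conditions coordinatewise. Convexity of
the quadratic term then turns the KKT conditions into global optimality.
-/

open Finset

noncomputable def thresholdObjective {ι : Type*} [Fintype ι] (β : ℝ) (b s : ι → ℝ) (μ : ℝ) :
    ℝ :=
  (1 / 2) * ∑ i, (s i + μ - b i) ^ 2 + β * ∑ i, |s i|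

/-- `½(r₀ + Δ)² ≥ ½ r₀² + r₀ Δ` for `Δ = (s − s₀) + (μ − μ₀)`, and `(r₀ + β)(s − s₀) ≥ 0`. -/
theorem half_sq_add_mul_le_of_kkt {x s₀ μ₀ s μ β : ℝ} (hs : 0 ≤ s)
    (hdual : 0 ≤ s₀ + μ₀ - x + β) (hcompl : (s₀ + μ₀ - x + β) * s₀ = 0) :
    1 / 2 * (s₀ + μ₀ - x) ^ 2 + β * s₀ + (μ - μ₀) * (s₀ + μ₀ - x) ≤
      1 / 2 * (s + μ - x) ^ 2 + β * s := by
  nlinarith [sq_nonneg (s + μ - s₀ - μ₀), mul_nonneg hdual hs]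

theorem thresholdObjective_le_of_kkt {ι : Type*} [Fintype ι] {β μ₀ μ : ℝ} {b s₀ s : ι → ℝ}
    (hs₀ : ∀ i, 0 ≤ s₀ i) (hdual : ∀ i, 0 ≤ s₀ i + μ₀ - b i + β)
    (hcompl : ∀ i, (s₀ i + μ₀ - b i + β) * s₀ i = 0)
    (hstat : ∑ i, (s₀ i + μ₀ - b i) = 0) (hs : ∀ i, 0 ≤ s i) :
    thresholdObjective β b s₀ μ₀ ≤ thresholdObjective β b s μ := by
  have hsum := sum_le_sum fun i (_ : i ∈ univ) =>
    half_sq_add_mul_le_of_kkt (μ := μ) (hs i) (hdual i) (hcompl i)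
  simp only [sum_add_distrib, ← mul_sum, hstat, mul_zero, add_zero] at hsum
  simpa only [thresholdObjective, abs_of_nonneg (hs₀ _), abs_of_nonneg (hs _)] using hsum

theorem ite_threshold_kkt {p : Prop} [Decidable p] {x β μ : ℝ} (hp : p → β + μ < x)
    (hnp : ¬p → x ≤ β + μ) :
    0 ≤ (if p then x - β - μ else 0) ∧ 0 ≤ (if p then x - β - μ else 0) + μ - x + β ∧
      ((if p then x - β - μ else 0) + μ - x + β) * (if p then x - β - μ else 0) = 0 := by
  by_cases h : p
  · simp only [if_pos h]
    refine ⟨by linarith [hp h], by linarith, by ring⟩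
  · simp only [if_neg h]
    refine ⟨le_rfl, by linarith [hnp h], by ring⟩

theorem sum_range_ite_lt {M : Type*} [AddCommMonoid M] {d n : ℕ} (hd : d ≤ n) (x : M)
    (f : ℕ → M) :
    ∑ k ∈ range n, (if k < d then x else f k) = d • x + ∑ k ∈ Ico d n, f k := by
  rw [← sum_range_add_sum_Ico _ hd,
    sum_congr rfl fun k hk => if_pos (mem_range.mp hk),
    sum_congr rfl fun k hk => if_neg (not_lt.mpr (mem_Ico.mp hk).1), sum_const, card_range]

section Sorted

variable {n : ℕ} {b : Fin n → ℝ} {σ : Equiv.Perm (Fin n)} {bb : ℕ → ℝ}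

theorem sorted_bb_le_apply (hsort : ∀ j k : Fin n, j ≤ k → b (σ k) ≤ b (σ j))
    (hbb : ∀ (k : ℕ) (h : k < n), bb k = b (σ ⟨k, h⟩)) {j : Fin n} {k : ℕ} (hk : k < n)
    (hjk : (j : ℕ) ≤ k) : bb k ≤ b (σ j) := by
  rw [hbb k hk]
  exact hsort _ _ hjk

theorem sorted_apply_le_bb (hsort : ∀ j k : Fin n, j ≤ k → b (σ k) ≤ b (σ j))
    (hbb : ∀ (k : ℕ) (h : k < n), bb k = b (σ ⟨k, h⟩)) {j : Fin n} {k : ℕ} (hk : k < n)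
    (hkj : k ≤ (j : ℕ)) : b (σ j) ≤ bb k := by
  rw [hbb k hk]
  exact hsort _ _ hkj

theorem sum_residual_eq_zero (hbb : ∀ (k : ℕ) (h : k < n), bb k = b (σ ⟨k, h⟩))
    {d : ℕ} (hdn : d < n) {β μ : ℝ}
    (hμ : μ = ((∑ k ∈ Ico d n, bb k) + d * β) / ((n : ℝ) - d)) {s : Fin n → ℝ}
    (hs : ∀ i : Fin n, s i = if ((σ.symm i : ℕ) < d) then b i - β - μ else 0) :
    ∑ i, (s i + μ - b i) = 0 := by
  have hres : ∀ j : Fin n, s (σ j) + μ - b (σ j) = if (j : ℕ) < d then -β else μ - bb j := by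
    intro j
    rw [hs, Equiv.symm_apply_apply]
    split_ifs
    · ring
    · rw [hbb _ j.isLt, zero_add]
  have hnd : (n : ℝ) - d ≠ 0 := sub_ne_zero.mpr (by exact_mod_cast hdn.ne')
  rw [← Equiv.sum_comp σ, sum_congr rfl fun j _ => hres j,
    Fin.sum_univ_eq_sum_range (fun k => if k < d then -β else μ - bb k),
    sum_range_ite_lt hdn.le, sum_sub_distrib, sum_const, Nat.card_Ico, nsmul_eq_mul,
    nsmul_eq_mul, Nat.cast_sub hdn.le, hμ]
  field_simp
  ring

end Sorted

theorem lt_of_thresholds {n d : ℕ} (hn : 0 < n) (hd : d ≤ n) {β : ℝ} (hβ : 0 ≤ β)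
    {bb : ℕ → ℝ} (h1 : d = 0 ∨ (0 < d ∧ ((n : ℝ) - d) * bb (d - 1) >
      (∑ k ∈ Ico d n, bb k) + n * β)) : d < n := by
  refine hd.lt_of_ne fun hdn => ?_
  rcases h1 with h0 | ⟨-, h1⟩
  · omega
  · subst hdn
    simp only [sub_self, zero_mul, Ico_self, sum_empty, zero_add] at h1
    exact h1.not_ge (by positivity)

/-- Closed-form solution of the thresholding subproblem. If the entries of
`b` sorted decreasingly (via the permutation σ, `bb k = b (σ k)` in 0-based indexing)
satisfy `(n−d) b_{i_d} > Σ_{j>d} b_{i_j} + nβ ≥ (n−d) b_{i_{d+1}}` (with `b_{i_0} = +∞`,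
encoded by the case `d = 0`), then `μ* = (Σ_{j>d} b_{i_j} + dβ)/(n−d)`,
`s*_{i_j} = b_{i_j} − β − μ* > 0` for `j ≤ d` and `s*_{i_j} = 0` for `j > d` form the
optimal solution of `min_{s ≥ 0, μ ≥ 0} (1/2)‖s + eμ − b‖₂² + β‖s‖₁`. -/
theorem stmt15 {n : ℕ} (hn : 0 < n) (b : Fin n → ℝ) (hb : ∀ i, 0 ≤ b i)
    (β : ℝ) (hβ : 0 < β)
    (σ : Equiv.Perm (Fin n))
    (hsort : ∀ j k : Fin n, j ≤ k → b (σ k) ≤ b (σ j))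
    (d : ℕ) (hd : d ≤ n)
    (bb : ℕ → ℝ) (hbb : ∀ (k : ℕ) (h : k < n), bb k = b (σ ⟨k, h⟩))
    (h1 : d = 0 ∨ (0 < d ∧ ((n : ℝ) - d) * bb (d - 1) >
      (∑ k ∈ Finset.Ico d n, bb k) + n * β))
    (h2 : (∑ k ∈ Finset.Ico d n, bb k) + n * β ≥ ((n : ℝ) - d) * bb d) :
    ∀ μstar : ℝ, μstar = ((∑ k ∈ Finset.Ico d n, bb k) + d * β) / ((n : ℝ) - d) →
    ∀ sstar : Fin n → ℝ,
      (∀ i : Fin n, sstar i = if ((σ.symm i : ℕ) < d) then b i - β - μstar else 0) →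
      (∀ j : Fin n, (j : ℕ) < d → 0 < b (σ j) - β - μstar) ∧
      (∀ i, 0 ≤ sstar i) ∧ 0 ≤ μstar ∧
      ∀ (s : Fin n → ℝ) (μ : ℝ), (∀ i, 0 ≤ s i) → 0 ≤ μ →
        (1 / 2) * ∑ i, (sstar i + μstar - b i) ^ 2 + β * ∑ i, |sstar i| ≤
        (1 / 2) * ∑ i, (s i + μ - b i) ^ 2 + β * ∑ i, |s i| := by
  intro μstar hμ sstar hsstar
  have hdn : d < n := lt_of_thresholds hn hd hβ.le h1
  have hnd : (0 : ℝ) < n - d := sub_pos.mpr (by exact_mod_cast hdn)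
  have hgap : (∑ k ∈ Ico d n, bb k) + n * β = ((n : ℝ) - d) * (β + μstar) := by
    rw [hμ]; field_simp; ring
  have habove : ∀ j : Fin n, (j : ℕ) < d → β + μstar < b (σ j) := by
    intro j hj
    rcases h1 with rfl | ⟨-, h1⟩
    · omega
    refine (lt_of_mul_lt_mul_left (hgap ▸ h1) hnd.le).trans_le ?_
    exact sorted_bb_le_apply hsort hbb (by omega) (by omega)
  have hbelow : ∀ j : Fin n, d ≤ (j : ℕ) → b (σ j) ≤ β + μstar := fun j hj =>
    (sorted_apply_le_bb hsort hbb hdn hj).trans (le_of_mul_le_mul_left (hgap ▸ h2) hnd)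
  have hkkt : ∀ i, 0 ≤ sstar i ∧ 0 ≤ sstar i + μstar - b i + β ∧
      (sstar i + μstar - b i + β) * sstar i = 0 := fun i => by
    rw [hsstar i]
    refine ite_threshold_kkt (fun h => ?_) (fun h => ?_) <;>
      rw [← Equiv.apply_symm_apply σ i]
    exacts [habove _ h, hbelow _ (not_lt.mp h)]
  have hμ0 : 0 ≤ μstar := hμ ▸ div_nonneg (add_nonneg (sum_nonneg fun k hk =>
    (hbb k (mem_Ico.mp hk).2).symm ▸ hb _) (by positivity)) hnd.le
  exact ⟨fun j hj => by linarith [habove j hj], fun i => (hkkt i).1, hμ0,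
    fun s μ hs _ => thresholdObjective_le_of_kkt (fun i => (hkkt i).1) (fun i => (hkkt i).2.1)
      (fun i => (hkkt i).2.2) (sum_residual_eq_zero hbb hdn hμ hsstar) hs⟩
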